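/- arXiv:1408.2666 — 2 statements merged into one kernel-verified Lean document; each statement's English description precedes it below -/
import Mathlib

section
/- Let 0 < s < 1, K > 1, and x, y ≥ 0 with |x − y| ≤ x/K. Then |⟨x⟩^s − ⟨y⟩^s| ≤ (s / (K−1)^(1−s)) · ⟨x − y⟩^s, where ⟨x⟩ = sqrt(1 + x²). -/
/-- The Japanese bracket `⟨x⟩ = √(1 + x²)`. -/
noncomputable def jb (x : ℝ) : ℝ := Real.sqrt (1 + x ^ 2)

lemma jb_pos (x : ℝ) : 0 < jb x := Real.sqrt_pos.mpr (by positivity)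

lemma self_le_jb {x : ℝ} (hx : 0 ≤ x) : x ≤ jb x := by
  have h := Real.sqrt_le_sqrt (show x ^ 2 ≤ 1 + x ^ 2 by nlinarith)
  rwa [Real.sqrt_sq hx] at h

lemma jb_mono {x y : ℝ} (hx : 0 ≤ x) (h : x ≤ y) : jb x ≤ jb y :=
  Real.sqrt_le_sqrt (by nlinarith)

lemma jb_lip {x y : ℝ} (hx : 0 ≤ x) (h : x ≤ y) : jb y ≤ jb x + (y - x) := by
  have h1 : jb x ^ 2 = 1 + x ^ 2 := Real.sq_sqrt (by positivity)
  have h2 : x ≤ jb x := self_le_jb hx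
  have h3 : 0 < jb x := jb_pos x
  have h4 : jb x + (y - x) = Real.sqrt ((jb x + (y - x)) ^ 2) :=
    (Real.sqrt_sq (by nlinarith)).symm
  rw [jb, h4]
  exact Real.sqrt_le_sqrt (by nlinarith)

lemma concave_key (s : ℝ) (hs0 : 0 < s) (hs1 : s < 1) {a b : ℝ} (hb : 0 < b) (hab : b ≤ a) :
    a ^ s - b ^ s ≤ s * b ^ (s - 1) * (a - b) := by
  have ha : 0 < a := hb.trans_le hab
  have hq : (0:ℝ) ≤ a / b := by positivity
  have hber := rpow_one_add_le_one_add_mul_self (s := a / b - 1)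
    (by linarith) (p := s) hs0.le hs1.le
  rw [add_sub_cancel] at hber
  rw [Real.div_rpow ha.le hb.le s] at hber
  have hbs : 0 < b ^ s := Real.rpow_pos_of_pos hb s
  have hbs1 : b ^ (s - 1) = b ^ s / b := by
    rw [Real.rpow_sub hb, Real.rpow_one]
  rw [hbs1]
  have hmul := mul_le_mul_of_nonneg_left hber hbs.le
  rw [mul_div_cancel₀ _ (ne_of_gt hbs)] at hmul
  have hb' : b ≠ 0 := ne_of_gt hb
  calc a ^ s - b ^ s ≤ b ^ s * (1 + s * (a / b - 1)) - b ^ s := by linarith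
    _ = s * (b ^ s / b) * (a - b) := by field_simp; ring

/-- If `y` is comparable to `x` (`|x−y| ≤ x/K`, `K > 1`), then
`|⟨x⟩^s − ⟨y⟩^s| ≤ (s/(K−1)^(1−s)) ⟨x−y⟩^s`. -/
theorem bracket_rpow_sub_comparable (s K x y : ℝ) (hs0 : 0 < s) (hs1 : s < 1)
    (hK : 1 < K) (hx : 0 ≤ x) (hy : 0 ≤ y) (hxy : |x - y| ≤ x / K) :
    |jb x ^ s - jb y ^ s| ≤ s / (K - 1) ^ (1 - s) * jb (x - y) ^ s := by
  rcases eq_or_ne x y with rfl | hne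
  · simp only [sub_self, abs_zero]
    have hc : 0 < (K - 1) ^ (1 - s) := Real.rpow_pos_of_pos (by linarith) _
    exact mul_nonneg (div_nonneg hs0.le hc.le) (Real.rpow_nonneg (jb_pos 0).le s)
  set d := |x - y| with hd
  have hd0 : 0 < d := abs_pos.mpr (sub_ne_zero.mpr hne)
  have hK0 : 0 < K := by linarith
  have hKd : K * d ≤ x := by
    rw [div_eq_inv_mul] at hxy
    calc K * d ≤ K * (K⁻¹ * x) := mul_le_mul_of_nonneg_left hxy hK0.le
      _ = x := by field_simp
  have hmin : (K - 1) * d ≤ min x y := by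
    have h1 : x - y ≤ d := le_abs_self _
    have h2 : y - x ≤ d := by rw [hd, abs_sub_comm]; exact le_abs_self _
    refine le_min (by nlinarith) (by nlinarith)
  set m := min x y with hm
  set M := max x y with hM
  have hm0 : 0 < m := lt_of_lt_of_le (by nlinarith) hmin
  have hmM : m ≤ M := min_le_max
  have hMm : M - m = d := by rw [hd, hm, hM, max_sub_min_eq_abs, abs_sub_comm]
  have hjm : 0 < jb m := jb_pos m
  have hjmM : jb m ≤ jb M := jb_mono hm0.le hmM
  have hle : jb m ^ s ≤ jb M ^ s := Real.rpow_le_rpow (jb_pos m).le hjmM hs0.le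
  have habs : |jb x ^ s - jb y ^ s| = jb M ^ s - jb m ^ s := by
    rcases le_total x y with h | h
    · have hMy : M = y := max_eq_right h
      have hmx : m = x := min_eq_left h
      rw [hMy, hmx] at hle ⊢
      rw [abs_sub_comm, abs_of_nonneg (by linarith)]
    · have hMy : M = x := max_eq_left h
      have hmx : m = y := min_eq_right h
      rw [hMy, hmx] at hle ⊢
      rw [abs_of_nonneg (by linarith)]
  rw [habs]
  have step1 : jb M ^ s - jb m ^ s ≤ s * jb m ^ (s - 1) * (jb M - jb m) :=
    concave_key s hs0 hs1 hjm hjmM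
  have step2 : jb M - jb m ≤ d := by
    have := jb_lip hm0.le hmM
    linarith [hMm]
  have hKd0 : 0 < (K - 1) * d := by nlinarith
  have step3 : jb m ^ (s - 1) ≤ ((K - 1) * d) ^ (s - 1) := by
    refine Real.rpow_le_rpow_of_nonpos hKd0 ?_ (by linarith)
    exact hmin.trans (self_le_jb hm0.le)
  have hdjb : d ≤ jb (x - y) := by
    have h := Real.sqrt_le_sqrt (show (x - y) ^ 2 ≤ 1 + (x - y) ^ 2 by nlinarith)
    rwa [Real.sqrt_sq_eq_abs] at h
  have step4 : d ^ s ≤ jb (x - y) ^ s := Real.rpow_le_rpow hd0.le hdjb hs0.le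
  have hc : ((K - 1) * d) ^ (s - 1) * d = (K - 1) ^ (s - 1) * d ^ s := by
    rw [Real.mul_rpow (by linarith) hd0.le]
    rw [show (s : ℝ) - 1 = s + (-1) by ring, Real.rpow_add hd0, Real.rpow_neg_one]
    field_simp
  have hcoef : (K - 1) ^ (s - 1) = ((K - 1) ^ (1 - s))⁻¹ := by
    rw [show (s : ℝ) - 1 = -(1 - s) by ring, Real.rpow_neg (by linarith)]
  have hcpos : 0 < (K - 1) ^ (1 - s) := Real.rpow_pos_of_pos (by linarith) _
  have h1 : 0 ≤ jb m ^ (s - 1) := (Real.rpow_pos_of_pos hjm _).le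
  have h2 : 0 ≤ jb M - jb m := by linarith
  calc jb M ^ s - jb m ^ s
      ≤ s * jb m ^ (s - 1) * (jb M - jb m) := step1
    _ ≤ s * ((K - 1) * d) ^ (s - 1) * d := by
        refine mul_le_mul ?_ step2 h2 ?_
        · exact mul_le_mul_of_nonneg_left step3 hs0.le
        · positivity
    _ = s * ((K - 1) ^ (s - 1) * d ^ s) := by rw [mul_assoc, hc]
    _ = s / (K - 1) ^ (1 - s) * d ^ s := by rw [hcoef]; field_simp
    _ ≤ s / (K - 1) ^ (1 - s) * jb (x - y) ^ s :=
        mul_le_mul_of_nonneg_left step4 (by positivity)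
end

section
/- For all 0 < s < 1 and all x, y ≥ 0 not both zero, ⟨x + y⟩^s ≤ (max{⟨x⟩, ⟨y⟩} / (⟨x⟩ + ⟨y⟩))^(1−s) · (⟨x⟩^s + ⟨y⟩^s), where ⟨x⟩ = sqrt(1 + x²). -/
/-- `⟨x+y⟩^s ≤ (max{⟨x⟩,⟨y⟩}/(⟨x⟩+⟨y⟩))^(1−s) (⟨x⟩^s + ⟨y⟩^s)`. -/
theorem bracket_rpow_add_max_bound (s x y : ℝ) (hs0 : 0 < s) (hs1 : s < 1)
    (hx : 0 ≤ x) (hy : 0 ≤ y) (hxy : ¬(x = 0 ∧ y = 0)) :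
    jb (x + y) ^ s ≤ (max (jb x) (jb y) / (jb x + jb y)) ^ (1 - s) * (jb x ^ s + jb y ^ s) := by
  set a := jb x with hadef
  set b := jb y with hbdef
  have ha2 : a ^ 2 = 1 + x ^ 2 := by rw [hadef, jb]; exact Real.sq_sqrt (by positivity)
  have hb2 : b ^ 2 = 1 + y ^ 2 := by rw [hbdef, jb]; exact Real.sq_sqrt (by positivity)
  have ha0 : 0 ≤ a := Real.sqrt_nonneg _
  have hb0 : 0 ≤ b := Real.sqrt_nonneg _
  have ha1 : 1 ≤ a := by nlinarith
  have hb1 : 1 ≤ b := by nlinarith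
  have hsum : jb (x + y) ≤ a + b := by
    rw [jb]
    have h : 1 + (x + y) ^ 2 ≤ (a + b) ^ 2 := by
      nlinarith [mul_nonneg hx hy, mul_nonneg ha0 hb0, sq_nonneg (x - y), sq_nonneg (a*b - x*y)]
    calc Real.sqrt (1 + (x + y) ^ 2) ≤ Real.sqrt ((a + b) ^ 2) := Real.sqrt_le_sqrt h
      _ = a + b := Real.sqrt_sq (by linarith)
  have hab : (0:ℝ) < a + b := by linarith
  have hM0 : 0 ≤ max a b := le_trans ha0 (le_max_left _ _)
  have h1 : jb (x + y) ^ s ≤ (a + b) ^ s :=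
    Real.rpow_le_rpow (Real.sqrt_nonneg _) hsum hs0.le
  refine h1.trans ?_
  rw [Real.div_rpow hM0 hab.le, div_mul_eq_mul_div, le_div_iff₀ (Real.rpow_pos_of_pos hab _)]
  have h1s : 0 ≤ 1 - s := by linarith
  have hMa : a ^ (1 - s) ≤ max a b ^ (1 - s) :=
    Real.rpow_le_rpow ha0 (le_max_left _ _) h1s
  have hMb : b ^ (1 - s) ≤ max a b ^ (1 - s) :=
    Real.rpow_le_rpow hb0 (le_max_right _ _) h1s
  have haa : a ^ (1 - s) * a ^ s = a := by
    rw [← Real.rpow_add (by linarith)]; simp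
  have hbb : b ^ (1 - s) * b ^ s = b := by
    rw [← Real.rpow_add (by linarith)]; simp
  have has : 0 ≤ a ^ s := Real.rpow_nonneg ha0 _
  have hbs : 0 ≤ b ^ s := Real.rpow_nonneg hb0 _
  have key : a + b ≤ max a b ^ (1 - s) * (a ^ s + b ^ s) := by
    nlinarith [mul_le_mul_of_nonneg_right hMa has, mul_le_mul_of_nonneg_right hMb hbs]
  calc (a + b) ^ s * (a + b) ^ (1 - s) = a + b := by
        rw [← Real.rpow_add hab]; simp
    _ ≤ _ := key
end
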